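/- Let p ∈ P_n have I-components [a_i^I]_{i∈I} and suppose that for all nonempty I ⊆ J ⊆ [n] the vectors (a_i^I)_{i∈I} and (a_i^J)_{i∈I} are linearly dependent. Define recursively K_1 = [n] and K_{ℓ+1} = {k ∈ K_ℓ : a_k^{K_ℓ} = 0}, and let m be minimal with K_{m+1} = ∅. Fix representatives (a_i^{K_s})_{i∈K_s} for 1 ≤ s ≤ m, and for t ∈ ℂ^× define q(t) = [a_1(t):⋯:a_n(t)] ∈ T_n by a_i(t) = t^s a_i^{K_s} whenever i ∈ K_s and i ∉ K_{s+1}. Then ρ(q(t)) tends to p in P_n as t → 0 (limit along nonzero t); in particular p lies in Y_n, the closure of ρ(T_n). -/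

import Mathlib

noncomputable section

open Projectivization

instance projTopology {K V : Type*} [DivisionRing K] [AddCommGroup V] [Module K V]
    [TopologicalSpace V] : TopologicalSpace (Projectivization K V) :=
  inferInstanceAs (TopologicalSpace (Quotient (projectivizationSetoid K V)))

/-- The index type of nonempty subsets of `ι`. -/
abbrev NES (ι : Type) := {I : Set ι // I.Nonempty}

/-- The ambient product `P = ∏_{∅ ≠ I ⊆ ι} ℙ^I` of projective spaces. -/
abbrev PSp (ι : Type) := (I : NES ι) → Projectivization ℂ (↥I.1 → ℂ)

/-- The subset of `ℙ^ι` consisting of points all of whose homogeneous coordinates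
are nonzero (an algebraic torus). -/
def torusSet (ι : Type) : Set (Projectivization ℂ (ι → ℂ)) := {x | ∀ i, x.rep i ≠ 0}

open Classical in
/-- The `i`-th homogeneous coordinate (for the chosen representative `rep`) of the
`K`-component of a point `p ∈ P`; junk value `0` if `i ∉ K` or `K = ∅`. -/
def pcoord (ι : Type) (p : PSp ι) (K : Set ι) (i : ι) : ℂ :=
  if h : K.Nonempty ∧ i ∈ K then (p ⟨K, h.1⟩).rep ⟨i, h.2⟩ else 0

lemma pcoord_exists_ne (ι : Type) (p : PSp ι) (K : Set ι) (hK : K.Nonempty) :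
    ∃ i, i ∈ K ∧ pcoord ι p K i ≠ 0 := by
  obtain ⟨x, hx⟩ := Function.ne_iff.mp (Projectivization.rep_nonzero (p ⟨K, hK⟩))
  refine ⟨x.1, x.2, ?_⟩
  rw [pcoord, dif_pos ⟨hK, x.2⟩]
  simpa using hx

/-- The map `ρ` from the torus to `P`, whose `I`-component is given by restricting
the homogeneous coordinates. -/
def rho (ι : Type) (x : ↥(torusSet ι)) : PSp ι := fun I =>
  Projectivization.mk ℂ (fun i : ↥I.1 => x.1.rep i.1) <| by
    obtain ⟨i, hi⟩ := I.2
    intro h0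
    exact x.2 i (by simpa using congrFun h0 ⟨i, hi⟩)

/-- `Y`, the closure of `ρ(T)` in `P`. -/
def Yn (ι : Type) : Set (PSp ι) := closure (Set.range (rho ι))

/-- The chain of a point `p ∈ P`: `chainK ι p 0 = univ` (this is `K₁` in the paper)
and `chainK ι p (ℓ+1)` (i.e. `K_{ℓ+2}`) consists of those `k ∈ chainK ι p ℓ` for which the
`k`-th homogeneous coordinate of the `chainK ι p ℓ`-component of `p` vanishes. -/
def chainK (ι : Type) (p : PSp ι) : ℕ → Set ι
  | 0 => Set.univ
  | ℓ + 1 => {k ∈ chainK ι p ℓ | pcoord ι p (chainK ι p ℓ) k = 0}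

/-- A chain of subsets `ι = K 0 ⊋ K 1 ⊋ ⋯ ⊋ K m = ∅` (written `K₁ ⊋ ⋯ ⊋ K_{m+1}` in
the paper); we extend it by `∅` beyond the `m`-th step so that it is determined by
the function `K`. -/
structure SubsetChain (ι : Type) where
  m : ℕ
  K : ℕ → Set ι
  first : K 0 = Set.univ
  strict : ∀ ℓ < m, K (ℓ + 1) ⊂ K ℓ
  last : K m = ∅
  beyond : ∀ ℓ, m ≤ ℓ → K ℓ = ∅

/-- The piece `O_{K₁,…,K_{m+1}}` of `Y`: those points of `Y` whose chain is the given one. -/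
def Ochain (ι : Type) (c : SubsetChain ι) : Set (PSp ι) :=
  {p ∈ Yn ι | ∀ ℓ ≤ c.m, chainK ι p ℓ = c.K ℓ}

/-- The subset `D_{K₁,…,K_{m+1}}` of `Y`: the points whose `K_ℓ`-component has vanishing
coordinates indexed by `K_{ℓ+1}`. -/
def Dchain (ι : Type) (c : SubsetChain ι) : Set (PSp ι) :=
  {p ∈ Yn ι | ∀ ℓ < c.m, ∀ k ∈ c.K (ℓ + 1), pcoord ι p (c.K ℓ) k = 0}

/-- The action of an element of the torus on a point of `P`:
`[a]·([b_i]_{i ∈ I})_I = ([a_i b_i]_{i ∈ I})_I`. -/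
def act (ι : Type) (t : ↥(torusSet ι)) (p : PSp ι) : PSp ι := fun I =>
  Projectivization.mk ℂ (fun i : ↥I.1 => t.1.rep i.1 * (p I).rep i) <| by
    intro h0
    obtain ⟨i, hi⟩ := Function.ne_iff.mp (Projectivization.rep_nonzero (p I))
    have h : t.1.rep i.1 * (p I).rep i = 0 := by simpa using congrFun h0 i
    exact mul_ne_zero (t.2 i.1) (by simpa using hi) h

/-- The action of a permutation `w` of `ι` on `P`: the `w(I)`-component of `w·p` is
`[a^I_{w⁻¹(j)}]_{j ∈ w(I)}`; equivalently the `J`-component of `w·p` is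
`[a^{w⁻¹(J)}_{w⁻¹(j)}]_{j ∈ J}`. -/
def permAct (ι : Type) (w : Equiv.Perm ι) (p : PSp ι) : PSp ι := fun J =>
  Projectivization.mk ℂ (fun j : ↥J.1 => pcoord ι p (⇑(w⁻¹) '' J.1) (w⁻¹ j.1)) <| by
    have hK : ((⇑(w⁻¹) : ι → ι) '' J.1).Nonempty := J.2.image _
    obtain ⟨i, hi, hne⟩ := pcoord_exists_ne ι p _ hK
    obtain ⟨j, hj, hji⟩ := hi
    intro h0
    apply hne
    have h := congrFun h0 ⟨j, hj⟩
    simpa [hji] using h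

/-!
On the `I`-component, `ρ(q(t))` is `[t^{s_i} a_i^{K_{s_i}}]_{i ∈ I}`. Dividing by `t^ℓ`, where
`ℓ` is the least `s_i` over `i ∈ I`, leaves a polynomial in `t` whose value at `t = 0` is
`a^{K_ℓ}` restricted to the indices with `s_i = ℓ` and zero elsewhere. Since `I ⊆ K_ℓ`, the
dependence of `a^I` and `a^{K_ℓ}|_I` makes `a^{K_ℓ}|_I` a nonzero multiple of `a^I`; its
coordinates with `s_i > ℓ` lie in `K_{ℓ+1}` and so vanish. Hence the limit is `[a^I]`.
-/

open Filter Topology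
open scoped LinearAlgebra.Projectivization

theorem Projectivization.tendsto_of_rep_eq_smul {K V α : Type*} [DivisionRing K]
    [AddCommGroup V] [Module K V] [TopologicalSpace V] {l : Filter α} {F : α → ℙ K V}
    {g : α → V} {v : V} (hv : v ≠ 0) (hg : Tendsto g l (𝓝 v))
    (hF : ∀ᶠ a in l, ∃ d : K, (F a).rep = d • g a) :
    Tendsto F l (𝓝 (mk K v hv)) := by
  classical
  have hF' : ∀ᶠ a in l, ∃ h : g a ≠ 0, F a = mk K (g a) h := by
    filter_upwards [hF] with a ha
    obtain ⟨d, hd⟩ := ha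
    have hga : g a ≠ 0 := fun h => (F a).rep_nonzero (by rw [hd, h, smul_zero])
    refine ⟨hga, ?_⟩
    rw [← mk_rep (F a), mk_eq_mk_iff']
    exact ⟨d, hd.symm⟩
  let G : α → {w : V // w ≠ 0} := fun a => if h : g a = 0 then ⟨v, hv⟩ else ⟨g a, h⟩
  have hG : Tendsto G l (𝓝 ⟨v, hv⟩) := by
    refine tendsto_subtype_rng.2 (hg.congr' ?_)
    filter_upwards [hF'] with a ha
    simp [G, ha.1]
  refine (((continuous_quotient_mk').tendsto _).comp hG).congr' ?_
  filter_upwards [hF'] with a ha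
  obtain ⟨h, hFa⟩ := ha
  simp only [Function.comp_apply, G, dif_neg h, hFa]
  rfl

section

variable {ι : Type} {p : PSp ι}

theorem pcoord_of_mem (p : PSp ι) (I : NES ι) {i : ι} (hi : i ∈ I.1) :
    pcoord ι p I.1 i = (p I).rep ⟨i, hi⟩ := by
  rw [pcoord, dif_pos ⟨I.2, hi⟩]

theorem exists_pcoord_eq_mul_of_dependent {I J : Set ι}
    (hdep : ∃ c d : ℂ, ¬(c = 0 ∧ d = 0) ∧
      ∀ i ∈ I, c * pcoord ι p I i + d * pcoord ι p J i = 0)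
    {i₀ : ι} (hi₀ : i₀ ∈ I) (hJ : pcoord ι p J i₀ ≠ 0) :
    ∃ e : ℂ, e ≠ 0 ∧ ∀ i ∈ I, pcoord ι p J i = e * pcoord ι p I i := by
  obtain ⟨c, d, hcd, hlin⟩ := hdep
  have hc : c ≠ 0 := by
    rintro rfl
    have hd : d ≠ 0 := fun hd => hcd ⟨rfl, hd⟩
    simpa [hd, hJ] using hlin i₀ hi₀
  have hd : d ≠ 0 := by
    rintro rfl
    obtain ⟨j, hj, hjne⟩ := pcoord_exists_ne ι p I ⟨i₀, hi₀⟩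
    simpa [hc, hjne] using hlin j hj
  refine ⟨-c / d, div_ne_zero (neg_ne_zero.2 hc) hd, fun i hi => ?_⟩
  field_simp
  linear_combination hlin i hi

theorem chainK_antitone (p : PSp ι) : Antitone (chainK ι p) :=
  antitone_nat_of_succ_le fun _ _ hk => hk.1

theorem lt_of_mem_chainK {m ℓ : ℕ} {i : ι} (hm : chainK ι p m = ∅)
    (hi : i ∈ chainK ι p ℓ) : ℓ < m := by
  by_contra! h
  simpa [hm] using chainK_antitone p h hi

variable {m : ℕ} {b : ℕ → ι → ℂ} {σ : ι → ℕ}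

theorem ne_zero_of_mem_chainK_of_notMem (hm : chainK ι p m = ∅)
    (hb : ∀ ℓ < m, ∃ c : ℂ, c ≠ 0 ∧
      ∀ i ∈ chainK ι p ℓ, b ℓ i = c * pcoord ι p (chainK ι p ℓ) i)
    {ℓ : ℕ} {i : ι} (hi : i ∈ chainK ι p ℓ) (hi' : i ∉ chainK ι p (ℓ + 1)) : b ℓ i ≠ 0 := by
  obtain ⟨c, hc, hbc⟩ := hb ℓ (lt_of_mem_chainK hm hi)
  rw [hbc i hi]
  exact mul_ne_zero hc fun h => hi' ⟨hi, h⟩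

/-- The left-hand side is the value at `t = 0` of `t ^ (σ i - σ i₀) * b (σ i) i`. -/
theorem exists_leading_eq_mul_pcoord
    (hdep : ∀ I J : Set ι, I.Nonempty → I ⊆ J →
      ∃ c d : ℂ, ¬(c = 0 ∧ d = 0) ∧ ∀ i ∈ I, c * pcoord ι p I i + d * pcoord ι p J i = 0)
    (hm : chainK ι p m = ∅)
    (hb : ∀ ℓ < m, ∃ c : ℂ, c ≠ 0 ∧
      ∀ i ∈ chainK ι p ℓ, b ℓ i = c * pcoord ι p (chainK ι p ℓ) i)
    (hσ : ∀ i, i ∈ chainK ι p (σ i) ∧ i ∉ chainK ι p (σ i + 1))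
    {I : Set ι} {i₀ : ι} (hi₀ : i₀ ∈ I) (hmin : ∀ i ∈ I, σ i₀ ≤ σ i) :
    ∃ e : ℂ, e ≠ 0 ∧ ∀ i ∈ I, (0 : ℂ) ^ (σ i - σ i₀) * b (σ i) i = e * pcoord ι p I i := by
  set ℓ := σ i₀
  have hIK : I ⊆ chainK ι p ℓ := fun i hi => chainK_antitone p (hmin i hi) (hσ i).1
  obtain ⟨c, hc, hbc⟩ := hb ℓ (lt_of_mem_chainK hm (hσ i₀).1)
  obtain ⟨e, he, hKI⟩ := exists_pcoord_eq_mul_of_dependent (hdep I _ ⟨i₀, hi₀⟩ hIK) hi₀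
    fun h => (hσ i₀).2 ⟨(hσ i₀).1, h⟩
  refine ⟨c * e, mul_ne_zero hc he, fun i hi => ?_⟩
  rcases (hmin i hi).eq_or_lt with h | h
  · rw [← h, Nat.sub_self, pow_zero, one_mul, hbc i (hIK hi), hKI i hi, mul_assoc]
  · have hK0 : pcoord ι p (chainK ι p ℓ) i = 0 := (chainK_antitone p h (hσ i).1).2
    rw [hKI i hi] at hK0
    rw [zero_pow (Nat.sub_ne_zero_of_lt h), zero_mul, (mul_eq_zero.1 hK0).resolve_left he,
      mul_zero]

theorem tendsto_apply_of_pcoord_eq_mul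
    (hdep : ∀ I J : Set ι, I.Nonempty → I ⊆ J →
      ∃ c d : ℂ, ¬(c = 0 ∧ d = 0) ∧ ∀ i ∈ I, c * pcoord ι p I i + d * pcoord ι p J i = 0)
    (hm : chainK ι p m = ∅)
    (hb : ∀ ℓ < m, ∃ c : ℂ, c ≠ 0 ∧
      ∀ i ∈ chainK ι p ℓ, b ℓ i = c * pcoord ι p (chainK ι p ℓ) i)
    (hσ : ∀ i, i ∈ chainK ι p (σ i) ∧ i ∉ chainK ι p (σ i + 1))
    {q : ℂ → ι → ℂ} (hq : ∀ t i, q t i = t ^ (σ i + 1) * b (σ i) i) {f : ℂ → PSp ι}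
    (hf : ∀ t : ℂ, t ≠ 0 → ∀ I : NES ι, ∃ d : ℂ, ∀ i ∈ I.1, pcoord ι (f t) I.1 i = d * q t i)
    (I : NES ι) : Tendsto (fun t => f t I) (𝓝[≠] 0) (𝓝 (p I)) := by
  set i₀ := Function.argminOn σ I.1 I.2
  have hi₀ : i₀ ∈ I.1 := Function.argminOn_mem σ I.1 I.2
  have hmin : ∀ i ∈ I.1, σ i₀ ≤ σ i := fun i hi => Function.argminOn_le σ I.1 hi
  let g : ℂ → I.1 → ℂ := fun t i => t ^ (σ i - σ i₀) * b (σ i) i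
  obtain ⟨e, he, hg0⟩ := exists_leading_eq_mul_pcoord hdep hm hb hσ hi₀ hmin
  have hg0ne : g 0 ≠ 0 := fun h => ne_zero_of_mem_chainK_of_notMem hm hb (hσ i₀).1 (hσ i₀).2
    (by simpa [g] using congrFun h ⟨i₀, hi₀⟩)
  have hpI : mk ℂ (g 0) hg0ne = p I := by
    rw [← mk_rep (p I), mk_eq_mk_iff']
    exact ⟨e, funext fun i => by simp [g, hg0 i i.2, pcoord_of_mem p I i.2]⟩
  rw [← hpI]
  refine tendsto_of_rep_eq_smul hg0ne
    (((by fun_prop : Continuous g).tendsto 0).mono_left nhdsWithin_le_nhds) ?_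
  filter_upwards [self_mem_nhdsWithin] with t ht
  obtain ⟨d, hd⟩ := hf t ht I
  refine ⟨d * t ^ (σ i₀ + 1), funext fun i => ?_⟩
  have hexp : σ i + 1 = σ i₀ + 1 + (σ i - σ i₀) := by have := hmin i i.2; omega
  rw [← pcoord_of_mem, hd i i.2, hq, hexp, pow_add]
  simp only [g, Pi.smul_apply, smul_eq_mul]
  ring

def torusPoint [Nonempty ι] (v : ι → ℂ) (hv : ∀ i, v i ≠ 0) : torusSet ι :=
  ⟨mk ℂ v (Function.ne_iff.2 ⟨Classical.arbitrary ι, hv _⟩), fun i => by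
    obtain ⟨a, ha⟩ := exists_smul_eq_mk_rep ℂ v (Function.ne_iff.2 ⟨Classical.arbitrary ι, hv _⟩)
    rw [← ha]
    simpa [Units.smul_def] using hv i⟩

theorem exists_pcoord_rho_torusPoint_eq_mul [Nonempty ι] (v : ι → ℂ) (hv : ∀ i, v i ≠ 0)
    (I : NES ι) :
    ∃ d : ℂ, d ≠ 0 ∧ ∀ i ∈ I.1, pcoord ι (rho ι (torusPoint v hv)) I.1 i = d * v i := by
  have hv0 : v ≠ 0 := Function.ne_iff.2 ⟨Classical.arbitrary ι, hv _⟩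
  obtain ⟨a, ha⟩ := exists_smul_eq_mk_rep ℂ v hv0
  have hI : (fun i : I.1 => (torusPoint v hv).1.rep i.1) ≠ 0 := by
    obtain ⟨j, hj⟩ := I.2
    exact fun h => (torusPoint v hv).2 j (congrFun h ⟨j, hj⟩)
  obtain ⟨aI, haI⟩ := exists_smul_eq_mk_rep ℂ _ hI
  refine ⟨aI * a, mul_ne_zero aI.ne_zero a.ne_zero, fun i hi => ?_⟩
  rw [pcoord_of_mem _ I hi]
  change (mk ℂ _ hI).rep ⟨i, hi⟩ = _
  rw [← haI]
  change (aI : ℂ) * (mk ℂ v hv0).rep i = _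
  rw [← ha]
  simp [Units.smul_def, mul_assoc]

end

open Filter Topology in
/-- Here `chainK (Fin n) p s` is the paper's `K_{s+1}`, `b ℓ` is the chosen representative
of the `K_{ℓ+1}`-component of `p`, and `σ i + 1` is the index `s` with `i ∈ K_s \ K_{s+1}`. -/
theorem stmt1_general (n : ℕ) (hn : 1 ≤ n) (p : PSp (Fin n))
    (hdep : ∀ I J : Set (Fin n), I.Nonempty → I ⊆ J →
      ∃ c d : ℂ, ¬(c = 0 ∧ d = 0) ∧
        ∀ i ∈ I, c * pcoord (Fin n) p I i + d * pcoord (Fin n) p J i = 0)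
    (m : ℕ) (hm : chainK (Fin n) p m = ∅)
    (b : ℕ → Fin n → ℂ)
    (hb : ∀ ℓ < m, ∃ c : ℂ, c ≠ 0 ∧
      ∀ i ∈ chainK (Fin n) p ℓ, b ℓ i = c * pcoord (Fin n) p (chainK (Fin n) p ℓ) i)
    (σ : Fin n → ℕ)
    (hσ : ∀ i, i ∈ chainK (Fin n) p (σ i) ∧ i ∉ chainK (Fin n) p (σ i + 1))
    (q : ℂ → Fin n → ℂ) (hq : ∀ t i, q t i = t ^ (σ i + 1) * b (σ i) i) :
    (∀ t : ℂ, t ≠ 0 → ∀ i, q t i ≠ 0) ∧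
    (∀ f : ℂ → PSp (Fin n),
      (∀ t : ℂ, t ≠ 0 → ∀ I : NES (Fin n), ∃ d : ℂ, d ≠ 0 ∧
        ∀ i ∈ I.1, pcoord (Fin n) (f t) I.1 i = d * q t i) →
      Tendsto f (𝓝[≠] (0 : ℂ)) (𝓝 p)) ∧
    p ∈ Yn (Fin n) := by
  have hq_ne : ∀ t : ℂ, t ≠ 0 → ∀ i, q t i ≠ 0 := fun t ht i => by
    rw [hq]
    exact mul_ne_zero (pow_ne_zero _ ht) (ne_zero_of_mem_chainK_of_notMem hm hb (hσ i).1 (hσ i).2)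
  have hlim : ∀ f : ℂ → PSp (Fin n),
      (∀ t : ℂ, t ≠ 0 → ∀ I : NES (Fin n), ∃ d : ℂ, d ≠ 0 ∧
        ∀ i ∈ I.1, pcoord (Fin n) (f t) I.1 i = d * q t i) →
      Tendsto f (𝓝[≠] (0 : ℂ)) (𝓝 p) := fun f hf =>
    tendsto_pi_nhds.2 <| tendsto_apply_of_pcoord_eq_mul hdep hm hb hσ hq fun t ht I =>
      (hf t ht I).imp fun _ => And.right
  refine ⟨hq_ne, hlim, ?_⟩
  have : Nonempty (Fin n) := ⟨⟨0, hn⟩⟩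
  let f : ℂ → PSp (Fin n) := fun t =>
    if ht : t = 0 then p else rho _ (torusPoint (q t) (hq_ne t ht))
  refine mem_closure_of_tendsto (hlim f fun t ht I => ?_) ?_
  · simpa only [f, dif_neg ht] using exists_pcoord_rho_torusPoint_eq_mul (q t) (hq_ne t ht) I
  · filter_upwards [self_mem_nhdsWithin] with t (ht : t ≠ 0)
    exact ⟨_, (dif_neg ht : f t = _).symm⟩

open Filter Topology in
/-- Limit construction from the proof of Proposition 2.4: if `p ∈ P_n` satisfies the
linear-dependence conditions, `K₁ ⊋ ⋯ ⊋ K_{m+1} = ∅` is its chain (here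
`K_{s+1} = chainK (Fin n) p s`), `b ℓ` is a choice of homogeneous representative of the
`K_{ℓ+1}`-component of `p`, `σ i + 1` is the paper's index `s` with `i ∈ K_s \ K_{s+1}`,
and `q t i = t ^ (σ i + 1) * b (σ i) i`, then `q t` has all coordinates nonzero for
`t ≠ 0`, and `ρ(q(t)) → p` as `t → 0` along nonzero `t`; in particular `p ∈ Y_n`. -/
theorem stmt1 (n : ℕ) (hn : 1 ≤ n) (p : PSp (Fin n))
    (hdep : ∀ I J : Set (Fin n), I.Nonempty → I ⊆ J →
      ∃ c d : ℂ, ¬(c = 0 ∧ d = 0) ∧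
        ∀ i ∈ I, c * pcoord (Fin n) p I i + d * pcoord (Fin n) p J i = 0)
    (m : ℕ) (hm : chainK (Fin n) p m = ∅) (hm' : ∀ ℓ < m, (chainK (Fin n) p ℓ).Nonempty)
    (b : ℕ → Fin n → ℂ)
    (hb : ∀ ℓ < m, ∃ c : ℂ, c ≠ 0 ∧
      ∀ i ∈ chainK (Fin n) p ℓ, b ℓ i = c * pcoord (Fin n) p (chainK (Fin n) p ℓ) i)
    (σ : Fin n → ℕ)
    (hσ : ∀ i, i ∈ chainK (Fin n) p (σ i) ∧ i ∉ chainK (Fin n) p (σ i + 1))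
    (q : ℂ → Fin n → ℂ) (hq : ∀ t i, q t i = t ^ (σ i + 1) * b (σ i) i) :
    (∀ t : ℂ, t ≠ 0 → ∀ i, q t i ≠ 0) ∧
    (∀ f : ℂ → PSp (Fin n),
      (∀ t : ℂ, t ≠ 0 → ∀ I : NES (Fin n), ∃ d : ℂ, d ≠ 0 ∧
        ∀ i ∈ I.1, pcoord (Fin n) (f t) I.1 i = d * q t i) →
      Tendsto f (𝓝[≠] (0 : ℂ)) (𝓝 p)) ∧
    p ∈ Yn (Fin n) :=
  stmt1_general n hn p hdep m hm b hb σ hσ q hq
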